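/- arXiv:1708.06851 — 4 statements merged into one kernel-verified Lean document; each statement's English description precedes it below -/
import Mathlib

section
/- Let P ∈ ℝ^{n×n} be a row-stochastic matrix and C ∈ ℝ^{m×m} be a row-stochastic matrix, and let Λ ∈ ℝ^{n×n} be a diagonal matrix with 0 ≤ Λ < I (all diagonal entries in [0,1)). Then every eigenvalue of the Kronecker product (ΛP) ⊗ C has real part strictly less than 1. -/
/-!
By Gershgorin's theorem every eigenvalue `μ` of a real matrix with non-negative entries satisfies
`re μ ≤ ∑ j, A i j` for some row `i`. The row sums of a Kronecker product are the products of the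
row sums of its factors, so the row sums of `(ΛP) ⊗ C` are the diagonal entries of `Λ`, which
are `< 1`.
-/

open Matrix

namespace Matrix

section Gershgorin

variable {ι : Type*} [Fintype ι] [DecidableEq ι]

theorem exists_re_le_of_mem_spectrum {A : Matrix ι ι ℂ} {μ : ℂ} (hμ : μ ∈ spectrum ℂ A) :
    ∃ k, μ.re ≤ (A k k).re + ∑ j ∈ Finset.univ.erase k, ‖A k j‖ := by
  rw [← spectrum_toLin', ← Module.End.hasEigenvalue_iff_mem_spectrum] at hμ
  obtain ⟨k, hk⟩ := eigenvalue_mem_ball hμ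
  rw [Metric.mem_closedBall, dist_eq_norm] at hk
  refine ⟨k, ?_⟩
  calc μ.re = (A k k).re + (μ - A k k).re := by simp
    _ ≤ (A k k).re + ‖μ - A k k‖ := by gcongr; exact Complex.re_le_norm _
    _ ≤ _ := by gcongr

theorem exists_re_le_sum_of_nonneg {A : Matrix ι ι ℝ} (hA : ∀ i j, 0 ≤ A i j) {μ : ℂ}
    (hμ : μ ∈ spectrum ℂ (A.map Complex.ofReal)) : ∃ i, μ.re ≤ ∑ j, A i j := by
  obtain ⟨k, hk⟩ := exists_re_le_of_mem_spectrum hμ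
  refine ⟨k, hk.trans_eq ?_⟩
  simp only [map_apply, Complex.ofReal_re, Complex.norm_real, Real.norm_of_nonneg (hA _ _)]
  exact Finset.add_sum_erase _ _ (Finset.mem_univ k)

end Gershgorin

variable {α ι ι' κ κ' : Type*} [NonUnitalNonAssocSemiring α]

theorem sum_kroneckerMap_mul_apply [Fintype ι'] [Fintype κ'] (A : Matrix ι ι' α)
    (B : Matrix κ κ' α) (i : ι × κ) :
    ∑ j, kroneckerMap (· * ·) A B i j = (∑ j, A i.1 j) * ∑ j, B i.2 j := by
  simp [Fintype.sum_prod_type, Finset.sum_mul_sum]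

theorem IsDiag.mul_apply [Fintype ι] [DecidableEq ι] {D : Matrix ι ι α} (hD : D.IsDiag)
    (M : Matrix ι κ α) (i : ι) (j : κ) : (D * M) i j = D i i * M i j := by
  simpa only [hD.diagonal_diag, diag_apply] using diagonal_mul D.diag M i j

end Matrix

theorem stmt9 {n m : ℕ} (P : Matrix (Fin n) (Fin n) ℝ) (C : Matrix (Fin m) (Fin m) ℝ)
    (Λ : Matrix (Fin n) (Fin n) ℝ)
    (hPnn : ∀ i j, 0 ≤ P i j) (hProw : ∀ i, ∑ j, P i j = 1)
    (hCnn : ∀ i j, 0 ≤ C i j) (hCrow : ∀ i, ∑ j, C i j = 1)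
    (hΛ : Λ.IsDiag) (hΛ0 : ∀ i, 0 ≤ Λ i i) (hΛ1 : ∀ i, Λ i i < 1) :
    ∀ μ ∈ spectrum ℂ ((Matrix.kroneckerMap (· * ·) (Λ * P) C).map Complex.ofReal),
      μ.re < 1 := by
  intro μ hμ
  have hΛP_nonneg (i j) : 0 ≤ (Λ * P) i j := by
    rw [hΛ.mul_apply]
    exact mul_nonneg (hΛ0 i) (hPnn i j)
  have hΛP_row (i) : ∑ j, (Λ * P) i j = Λ i i := by
    simp only [hΛ.mul_apply, ← Finset.mul_sum, hProw, mul_one]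
  obtain ⟨i, hi⟩ := exists_re_le_sum_of_nonneg (A := kroneckerMap (· * ·) (Λ * P) C)
    (fun i j ↦ mul_nonneg (hΛP_nonneg i.1 j.1) (hCnn i.2 j.2)) hμ
  rw [sum_kroneckerMap_mul_apply, hΛP_row, hCrow, mul_one] at hi
  exact hi.trans_lt (hΛ1 i.1)
end

section
/- Let Λ, P ∈ ℝ^{n×n} and C ∈ ℝ^{m×m} with P and C row-stochastic and Λ diagonal with 0 ≤ Λ < I. Then for any X₀ ∈ ℝ^{n×m}, the matrix equation X = Λ P X Cᵀ + (I - Λ) X₀ has a unique solution X* ∈ ℝ^{n×m}. -/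
open Matrix

lemma stmt10_aux {n m : ℕ} (P : Matrix (Fin n) (Fin n) ℝ) (C : Matrix (Fin m) (Fin m) ℝ)
    (Λ : Matrix (Fin n) (Fin n) ℝ)
    (hPnn : ∀ i j, 0 ≤ P i j) (hProw : ∀ i, ∑ j, P i j = 1)
    (hCnn : ∀ i j, 0 ≤ C i j) (hCrow : ∀ i, ∑ j, C i j = 1)
    (hΛ : Λ.IsDiag) (hΛ0 : ∀ i, 0 ≤ Λ i i) (hΛ1 : ∀ i, Λ i i < 1)
    (X : Matrix (Fin n) (Fin m) ℝ) (hX : X = Λ * P * X * Cᵀ) : X = 0 := by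
  rcases Nat.eq_zero_or_pos n with hn | hn
  · subst hn; ext i j; exact i.elim0
  rcases Nat.eq_zero_or_pos m with hm | hm
  · subst hm; ext i j; exact j.elim0
  obtain ⟨p0, -, hmax⟩ := Finset.exists_max_image (Finset.univ : Finset (Fin n × Fin m))
    (fun p => |X p.1 p.2|) ⟨(⟨0, hn⟩, ⟨0, hm⟩), Finset.mem_univ _⟩
  obtain ⟨i0, j0⟩ := p0
  set M : ℝ := |X i0 j0| with hM
  have hMnn : 0 ≤ M := abs_nonneg _
  have hMmax : ∀ i j, |X i j| ≤ M := fun i j => hmax (i, j) (Finset.mem_univ _)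
  have hentry : ∀ i j, X i j = Λ i i * ∑ l, (∑ k, P i k * X k l) * C j l := by
    intro i j
    have h1 : Λ * P * X * Cᵀ = Λ * (P * X * Cᵀ) := by
      rw [Matrix.mul_assoc, Matrix.mul_assoc, Matrix.mul_assoc]
    conv_lhs => rw [hX, h1]
    rw [Matrix.mul_apply]
    rw [Finset.sum_eq_single i]
    · simp [Matrix.mul_apply]
    · intro k _ hk
      rw [hΛ (Ne.symm hk), zero_mul]
    · intro h; exact absurd (Finset.mem_univ i) h
  have hbound : ∀ i j, |∑ l, (∑ k, P i k * X k l) * C j l| ≤ M := by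
    intro i j
    calc |∑ l, (∑ k, P i k * X k l) * C j l|
        ≤ ∑ l, |(∑ k, P i k * X k l) * C j l| := Finset.abs_sum_le_sum_abs _ _
      _ ≤ ∑ l, M * C j l := by
          refine Finset.sum_le_sum fun l _ => ?_
          rw [abs_mul, abs_of_nonneg (hCnn j l)]
          refine mul_le_mul_of_nonneg_right ?_ (hCnn j l)
          calc |∑ k, P i k * X k l| ≤ ∑ k, |P i k * X k l| := Finset.abs_sum_le_sum_abs _ _
            _ ≤ ∑ k, P i k * M := by
                refine Finset.sum_le_sum fun k _ => ?_
                rw [abs_mul, abs_of_nonneg (hPnn i k)]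
                exact mul_le_mul_of_nonneg_left (hMmax k l) (hPnn i k)
            _ = M := by rw [← Finset.sum_mul, hProw, one_mul]
      _ = M := by rw [← Finset.mul_sum, hCrow, mul_one]
  have hMle : M ≤ Λ i0 i0 * M := by
    calc M = |X i0 j0| := hM
      _ = |Λ i0 i0 * ∑ l, (∑ k, P i0 k * X k l) * C j0 l| := by rw [hentry i0 j0]
      _ = |Λ i0 i0| * |∑ l, (∑ k, P i0 k * X k l) * C j0 l| := abs_mul _ _
      _ ≤ Λ i0 i0 * M := by
          rw [abs_of_nonneg (hΛ0 i0)]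
          exact mul_le_mul_of_nonneg_left (hbound i0 j0) (hΛ0 i0)
  have hM0 : M = 0 := by nlinarith [hΛ1 i0, hΛ0 i0]
  ext i j
  have := hMmax i j
  rw [hM0] at this
  simpa using abs_nonpos_iff.mp this

theorem stmt10 {n m : ℕ} (P : Matrix (Fin n) (Fin n) ℝ) (C : Matrix (Fin m) (Fin m) ℝ)
    (Λ : Matrix (Fin n) (Fin n) ℝ)
    (hPnn : ∀ i j, 0 ≤ P i j) (hProw : ∀ i, ∑ j, P i j = 1)
    (hCnn : ∀ i j, 0 ≤ C i j) (hCrow : ∀ i, ∑ j, C i j = 1)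
    (hΛ : Λ.IsDiag) (hΛ0 : ∀ i, 0 ≤ Λ i i) (hΛ1 : ∀ i, Λ i i < 1)
    (X₀ : Matrix (Fin n) (Fin m) ℝ) :
    ∃! X : Matrix (Fin n) (Fin m) ℝ, X = Λ * P * X * Cᵀ + (1 - Λ) * X₀ := by
  let f : Matrix (Fin n) (Fin m) ℝ →ₗ[ℝ] Matrix (Fin n) (Fin m) ℝ :=
    { toFun := fun X => X - Λ * P * X * Cᵀ
      map_add' := by
        intro X Y
        simp only [Matrix.mul_add, Matrix.add_mul]
        abel
      map_smul' := by
        intro c X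
        simp only [Matrix.mul_smul, Matrix.smul_mul, smul_sub, RingHom.id_apply] }
  have hinj : Function.Injective f := by
    rw [injective_iff_map_eq_zero]
    intro X hX0
    have hX0' : X - Λ * P * X * Cᵀ = 0 := hX0
    exact stmt10_aux P C Λ hPnn hProw hCnn hCrow hΛ hΛ0 hΛ1 X (by
      have := sub_eq_zero.mp hX0'; exact this)
  have hsurj : Function.Surjective f := LinearMap.injective_iff_surjective.mp hinj
  obtain ⟨X, hXs⟩ := hsurj ((1 - Λ) * X₀)
  have hXs' : X - Λ * P * X * Cᵀ = (1 - Λ) * X₀ := hXs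
  refine ⟨X, ?_, ?_⟩
  · show X = Λ * P * X * Cᵀ + (1 - Λ) * X₀
    rw [← sub_eq_iff_eq_add']; exact hXs'
  · intro Y hY
    apply hinj
    show Y - Λ * P * Y * Cᵀ = X - Λ * P * X * Cᵀ
    rw [hXs']
    rw [sub_eq_iff_eq_add']
    exact hY
end

section
/- Let A ∈ ℝ^{n×n} satisfy A_{ii} ≤ 0, A_{ij} ≥ 0 for j ≠ i, and ∑_{j=1}^n A_{ij} = 0 for every i. Then A has at least one zero eigenvalue and all non-zero eigenvalues of A have negative real part. Moreover, A has exactly one zero eigenvalue if and only if the directed graph associated with A (with an edge (j,i) whenever A_{ij} > 0) contains a directed spanning tree. -/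
/-!
Zero row sums say that `A 𝟙 = 0`, and Gershgorin's discs of `A` are centred at `A i i ≤ 0` with
radius `-A i i`, so they meet the closed right half-plane only at `0`.

For the multiplicity, zero row sums let a column operation factor `charpoly A = X * q`, where
`q(0) = det M` and `M` is `-A` with its `r`-th column replaced by ones. If `r` is a root of a
spanning tree, `M` is injective: a kernel vector yields `y` with `A y` constant, the maximum
principle for such matrices forces the constant to vanish, and then `y` is constant along the
paths from `r`, hence zero. Without a spanning tree there are two nodes without a common
ancestor; their ancestor sets are closed under in-neighbours, so they give two diagonal blocks of
a block-triangular form of `A`, each with zero row sums, and `X ^ 2` divides the charpoly.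
-/

open Matrix Polynomial Finset Relation

theorem Relation.exists_pair_no_common_ancestor {α : Type*} [Finite α] [Nonempty α]
    {s : α → α → Prop} (h : ¬∃ r, ∀ j, ReflTransGen s r j) :
    ∃ u w, ∀ z, ReflTransGen s z u → ¬ReflTransGen s z w := by
  obtain ⟨u, hu⟩ := Finite.exists_max fun z => {j | ReflTransGen s z j}.ncard
  obtain ⟨w, hw⟩ := not_forall.mp (not_exists.mp h u)
  refine ⟨u, w, fun z hzu hzw => hw ?_⟩
  have hsub : {j | ReflTransGen s u j} ⊆ {j | ReflTransGen s z j} := fun j hj => hzu.trans hj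
  change w ∈ {j | ReflTransGen s u j}
  rwa [Set.eq_of_subset_of_ncard_le hsub (hu z)]

theorem Complex.re_neg_of_norm_sub_ofReal_le {μ : ℂ} {c : ℝ} (h : ‖μ - c‖ ≤ -c)
    (hμ : μ ≠ 0) : μ.re < 0 := by
  have hsq : ‖μ - c‖ ^ 2 ≤ c ^ 2 := by nlinarith [norm_nonneg (μ - c)]
  rw [Complex.sq_norm, Complex.normSq_apply] at hsq
  simp only [Complex.sub_re, Complex.ofReal_re, Complex.sub_im, Complex.ofReal_im, sub_zero] at hsq
  have hc : c ≤ 0 := by linarith [(norm_nonneg _).trans h]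
  by_contra! hre
  refine hμ (Complex.ext ?_ ?_) <;> simp only [Complex.zero_re, Complex.zero_im] <;> nlinarith

namespace Matrix

theorem reflTransGen_of_apply_ne_zero {ι R : Type*} [Zero R] [PartialOrder R] {A : Matrix ι ι R}
    (hoff : ∀ i j, i ≠ j → 0 ≤ A i j) {i j u : ι}
    (hiu : ReflTransGen (fun x y => 0 < A y x) i u) (hij : A i j ≠ 0) :
    ReflTransGen (fun x y => 0 < A y x) j u := by
  rcases eq_or_ne i j with rfl | hne
  · exact hiu
  · exact hiu.head ((hoff i j hne).lt_of_ne' hij)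

variable {ι R : Type*} [Fintype ι]

section CommRing

variable [CommRing R]

theorem mulVec_apply_eq_sum_mul_sub {A : Matrix ι ι R} (hA : ∀ i, ∑ j, A i j = 0)
    (y : ι → R) (i : ι) : (A *ᵥ y) i = ∑ j, A i j * (y j - y i) := by
  simp only [mulVec, dotProduct, mul_sub, sum_sub_distrib, ← sum_mul, hA, zero_mul, sub_zero]

variable [DecidableEq ι]

theorem updateCol_mulVec (B : Matrix ι ι R) (r : ι) (c v : ι → R) :
    B.updateCol r c *ᵥ v = B *ᵥ Function.update v r 0 + v r • c := by
  ext i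
  simp [mulVec, dotProduct, updateCol_apply, Function.update_apply, sum_ite, filter_eq', mul_comm,
    add_comm]

theorem det_eq_mul_det_updateCol_one {B : Matrix ι ι R} {s : R} (hB : ∀ i, ∑ j, B i j = s)
    (r : ι) : B.det = s * (B.updateCol r 1).det := by
  have h := det_updateCol_sum B r 1
  simp only [Pi.one_apply, one_smul, hB] at h
  rw [← h, ← det_updateCol_smul]
  congr
  ext
  simp

theorem sum_charmatrix_apply (A : Matrix ι ι R) (i : ι) :
    ∑ j, charmatrix A i j = X - C (∑ j, A i j) := by
  simp [charmatrix_apply, sum_sub_distrib, diagonal_apply]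

theorem charpoly_eq_X_mul_det_updateCol {A : Matrix ι ι R} (hA : ∀ i, ∑ j, A i j = 0) (r : ι) :
    A.charpoly = X * ((charmatrix A).updateCol r 1).det :=
  det_eq_mul_det_updateCol_one (fun i => by simp [sum_charmatrix_apply, hA]) r

theorem eval_zero_det_updateCol_charmatrix (A : Matrix ι ι R) (r : ι) :
    (((charmatrix A).updateCol r 1).det).eval 0 = ((-A).updateCol r 1).det := by
  have h : (charmatrix A).map (evalRingHom 0) = -A := by
    ext i j
    rcases eq_or_ne i j with rfl | hij
    · simp [charmatrix_apply_eq]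
    · simp [charmatrix_apply_ne _ _ _ hij]
  rw [← coe_evalRingHom, RingHom.map_det, RingHom.mapMatrix_apply, map_updateCol, h]
  congr
  ext
  simp

theorem X_dvd_charpoly_of_sum_eq_zero [Nonempty ι] {A : Matrix ι ι R}
    (hA : ∀ i, ∑ j, A i j = 0) : X ∣ A.charpoly :=
  ⟨_, charpoly_eq_X_mul_det_updateCol hA (Classical.arbitrary ι)⟩

theorem rootMultiplicity_zero_charpoly_eq_one [IsDomain R] {A : Matrix ι ι R}
    (hA : ∀ i, ∑ j, A i j = 0) {r : ι} (hr : ((-A).updateCol r 1).det ≠ 0) :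
    A.charpoly.rootMultiplicity 0 = 1 := by
  set q := ((charmatrix A).updateCol r 1).det
  have hq : ¬q.IsRoot 0 := by
    rwa [IsRoot, eval_zero_det_updateCol_charmatrix]
  have hq0 : q ≠ 0 := fun h => hq (by simp [h])
  rw [charpoly_eq_X_mul_det_updateCol hA r, rootMultiplicity_mul (mul_ne_zero X_ne_zero hq0),
    rootMultiplicity_eq_zero (x := 0) hq]
  simpa using rootMultiplicity_X_sub_C_self (x := (0 : R))

theorem X_dvd_charpoly_toSquareBlock {α : Type*} [DecidableEq α] {A : Matrix ι ι R}
    (hA : ∀ i, ∑ j, A i j = 0) {b : ι → α} {a : α}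
    (hclosed : ∀ i j, b i = a → A i j ≠ 0 → b j = a) (hne : ∃ i, b i = a) :
    X ∣ (A.toSquareBlock b a).charpoly := by
  obtain ⟨i₀, hi₀⟩ := hne
  have : Nonempty {i // b i = a} := ⟨⟨i₀, hi₀⟩⟩
  refine X_dvd_charpoly_of_sum_eq_zero fun i => ?_
  have hout : ∑ j : {j // ¬b j = a}, A i j = 0 :=
    Fintype.sum_eq_zero _ fun j => not_imp_comm.mp (hclosed i j i.2) j.2
  rw [← hA i, ← Fintype.sum_subtype_add_sum_subtype (fun j => b j = a), hout, add_zero]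
  rfl

theorem X_sq_dvd_charpoly {A : Matrix ι ι R} (hA : ∀ i, ∑ j, A i j = 0) {p q : ι → Prop}
    (hp : ∀ i j, p i → A i j ≠ 0 → p j) (hq : ∀ i j, q i → A i j ≠ 0 → q j)
    (hpq : ∀ i, p i → ¬q i) (hp' : ∃ i, p i) (hq' : ∃ i, q i) :
    X ^ 2 ∣ A.charpoly := by
  classical
  let b : ι → ℕ := fun i => if p i then 2 else if q i then 1 else 0
  have hb2 : ∀ i, b i = 2 ↔ p i := fun i => by by_cases p i <;> by_cases q i <;> simp [b, *]
  have hb1 : ∀ i, b i = 1 ↔ q i := fun i => by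
    by_cases hpi : p i
    · simp [b, hpi, hpq i hpi]
    · by_cases q i <;> simp [b, *]
  have hblock : A.BlockTriangular b := by
    intro i j hji
    by_contra hij
    by_cases hpi : p i
    · have := (hb2 j).mpr (hp i j hpi hij); have := (hb2 i).mpr hpi; omega
    by_cases hqi : q i
    · have := (hb1 j).mpr (hq i j hqi hij); have := (hb1 i).mpr hqi; omega
    · simp [b, hpi, hqi] at hji
  have hdvd : ∀ a, (∀ i j, b i = a → A i j ≠ 0 → b j = a) → (∃ i, b i = a) →
      X ∣ (A.toSquareBlock b a).charpoly := fun a => X_dvd_charpoly_toSquareBlock hA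
  have h2 : 2 ∈ image b univ := by simpa [hb2] using hp'
  have h1 : 1 ∈ (image b univ).erase 2 := by simpa [hb1] using hq'
  rw [hblock.charpoly, ← mul_prod_erase _ _ h2, ← mul_prod_erase _ _ h1, ← mul_assoc, sq]
  refine dvd_mul_of_dvd_left (mul_dvd_mul (hdvd 2 ?_ ?_) (hdvd 1 ?_ ?_)) _
  · simpa only [hb2] using hp
  · simpa only [hb2] using hp'
  · simpa only [hb1] using hq
  · simpa only [hb1] using hq'

end CommRing

section OrderedRing

variable [CommRing R] [LinearOrder R] [IsStrictOrderedRing R] {A : Matrix ι ι R}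

theorem mulVec_apply_nonpos_of_forall_le (hoff : ∀ i j, i ≠ j → 0 ≤ A i j)
    (hA : ∀ i, ∑ j, A i j = 0) {y : ι → R} {i : ι} (hy : ∀ j, y j ≤ y i) : (A *ᵥ y) i ≤ 0 := by
  rw [mulVec_apply_eq_sum_mul_sub hA]
  refine sum_nonpos fun j _ => ?_
  rcases eq_or_ne i j with rfl | hij
  · simp
  · exact mul_nonpos_of_nonneg_of_nonpos (hoff i j hij) (sub_nonpos.mpr (hy j))

theorem apply_eq_of_mulVec_apply_eq_zero (hoff : ∀ i j, i ≠ j → 0 ≤ A i j)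
    (hA : ∀ i, ∑ j, A i j = 0) {y : ι → R} {i j : ι} (hy : ∀ j, y j ≤ y i)
    (hAy : (A *ᵥ y) i = 0) (hij : 0 < A i j) : y j = y i := by
  rw [mulVec_apply_eq_sum_mul_sub hA] at hAy
  have hterm := (sum_eq_zero_iff_of_nonpos fun k _ => ?_).mp hAy j (mem_univ j)
  · exact sub_eq_zero.mp ((mul_eq_zero.mp hterm).resolve_left hij.ne')
  rcases eq_or_ne i k with rfl | hik
  · simp
  · exact mul_nonpos_of_nonneg_of_nonpos (hoff i k hik) (sub_nonpos.mpr (hy k))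

theorem eq_zero_of_mulVec_eq_const [Nonempty ι] (hoff : ∀ i j, i ≠ j → 0 ≤ A i j)
    (hA : ∀ i, ∑ j, A i j = 0) {y : ι → R} {c : R} (hAy : A *ᵥ y = fun _ => c) : c = 0 := by
  obtain ⟨imax, himax⟩ := Finite.exists_max y
  obtain ⟨imin, himin⟩ := Finite.exists_max (-y)
  have hmax := mulVec_apply_nonpos_of_forall_le hoff hA himax
  have hmin := mulVec_apply_nonpos_of_forall_le hoff hA himin
  rw [hAy] at hmax
  rw [mulVec_neg, hAy] at hmin
  simp only [Pi.neg_apply, Left.neg_nonpos_iff] at hmin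
  exact le_antisymm hmax hmin

theorem apply_eq_of_reflTransGen (hoff : ∀ i j, i ≠ j → 0 ≤ A i j)
    (hA : ∀ i, ∑ j, A i j = 0) {y : ι → R} (hAy : A *ᵥ y = 0) {i : ι} (hy : ∀ j, y j ≤ y i)
    {a : ι} (ha : ReflTransGen (fun x y => 0 < A y x) a i) : y a = y i := by
  induction ha using ReflTransGen.head_induction_on with
  | refl => rfl
  | head hac _ ih =>
    rw [← ih]
    exact apply_eq_of_mulVec_apply_eq_zero hoff hA (ih ▸ hy) (congrFun hAy _) hac

theorem forall_apply_le_of_reflTransGen (hoff : ∀ i j, i ≠ j → 0 ≤ A i j)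
    (hA : ∀ i, ∑ j, A i j = 0) {y : ι → R} (hAy : A *ᵥ y = 0) {r : ι}
    (hr : ∀ j, ReflTransGen (fun x y => 0 < A y x) r j) (j : ι) : y j ≤ y r := by
  have : Nonempty ι := ⟨r⟩
  obtain ⟨imax, himax⟩ := Finite.exists_max y
  exact apply_eq_of_reflTransGen hoff hA hAy himax (hr imax) ▸ himax j

theorem eq_const_of_mulVec_eq_zero (hoff : ∀ i j, i ≠ j → 0 ≤ A i j)
    (hA : ∀ i, ∑ j, A i j = 0) {y : ι → R} (hAy : A *ᵥ y = 0) {r : ι}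
    (hr : ∀ j, ReflTransGen (fun x y => 0 < A y x) r j) (j : ι) : y j = y r := by
  have hneg : A *ᵥ -y = 0 := by rw [mulVec_neg, hAy, neg_zero]
  exact le_antisymm (forall_apply_le_of_reflTransGen hoff hA hAy hr j)
    (neg_le_neg_iff.mp (forall_apply_le_of_reflTransGen hoff hA hneg hr j))

variable [DecidableEq ι]

theorem det_neg_updateCol_one_ne_zero (hoff : ∀ i j, i ≠ j → 0 ≤ A i j)
    (hA : ∀ i, ∑ j, A i j = 0) {r : ι} (hr : ∀ j, ReflTransGen (fun x y => 0 < A y x) r j) :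
    ((-A).updateCol r 1).det ≠ 0 := by
  have : Nonempty ι := ⟨r⟩
  rw [Ne, ← exists_mulVec_eq_zero_iff]
  rintro ⟨v, hv0, hv⟩
  set y := Function.update v r 0
  have hAy : A *ᵥ y = fun _ => v r := by
    rw [updateCol_mulVec, neg_mulVec, neg_add_eq_zero] at hv
    rw [hv]
    ext
    simp
  have hvr : v r = 0 := eq_zero_of_mulVec_eq_const hoff hA hAy
  rw [hvr] at hAy
  have hy : y = 0 := funext fun j => by
    rw [eq_const_of_mulVec_eq_zero hoff hA hAy hr j]
    simp [y]
  exact hv0 (by rw [← Function.update_eq_self r v, hvr]; exact hy)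

theorem rootMultiplicity_zero_charpoly_eq_one_iff [Nonempty ι]
    (hoff : ∀ i j, i ≠ j → 0 ≤ A i j) (hA : ∀ i, ∑ j, A i j = 0) :
    A.charpoly.rootMultiplicity 0 = 1 ↔ ∃ r, ∀ j, ReflTransGen (fun x y => 0 < A y x) r j := by
  refine ⟨fun h => ?_, fun ⟨r, hr⟩ =>
    rootMultiplicity_zero_charpoly_eq_one hA (det_neg_updateCol_one_ne_zero hoff hA hr)⟩
  by_contra hroot
  obtain ⟨u, w, huw⟩ := Relation.exists_pair_no_common_ancestor hroot
  have hX2 := X_sq_dvd_charpoly hA (fun i j hi hij => reflTransGen_of_apply_ne_zero hoff hi hij)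
    (fun i j hi hij => reflTransGen_of_apply_ne_zero hoff hi hij) huw ⟨u, .refl⟩ ⟨w, .refl⟩
  have := (le_rootMultiplicity_iff A.charpoly_monic.ne_zero (a := 0) (n := 2)).mpr
    (by simpa using hX2)
  omega

end OrderedRing

variable [DecidableEq ι]

theorem zero_mem_spectrum_of_sum_eq_zero {K : Type*} [Field K] [Nonempty ι]
    {A : Matrix ι ι K} (hA : ∀ i, ∑ j, A i j = 0) : (0 : K) ∈ spectrum K A := by
  rw [mem_spectrum_iff_isRoot_charpoly, IsRoot.def, ← coeff_zero_eq_eval_zero, ← X_dvd_iff]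
  exact X_dvd_charpoly_of_sum_eq_zero hA

theorem re_neg_of_mem_spectrum_map_ofReal {A : Matrix ι ι ℝ}
    (hoff : ∀ i j, i ≠ j → 0 ≤ A i j) (hA : ∀ i, ∑ j, A i j = 0) {μ : ℂ}
    (hμ : μ ∈ spectrum ℂ (A.map Complex.ofReal)) (hμ0 : μ ≠ 0) : μ.re < 0 := by
  rw [← spectrum_toLin', ← Module.End.hasEigenvalue_iff_mem_spectrum] at hμ
  obtain ⟨k, hk⟩ := eigenvalue_mem_ball hμ
  have hrad : ∑ j ∈ univ.erase k, ‖A.map Complex.ofReal k j‖ = -A k k := by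
    have hnorm : ∀ j ∈ univ.erase k, ‖A.map Complex.ofReal k j‖ = A k j := fun j hj => by
      simp [abs_of_nonneg (hoff k j (ne_of_mem_erase hj).symm)]
    rw [sum_congr rfl hnorm, sum_erase_eq_sub (mem_univ k), hA k, zero_sub]
  rw [Metric.mem_closedBall, dist_eq_norm, hrad] at hk
  exact Complex.re_neg_of_norm_sub_ofReal_le hk hμ0

end Matrix

theorem stmt13_general {n : ℕ} (hn : 0 < n) (A : Matrix (Fin n) (Fin n) ℝ)
    (hoff : ∀ i j, i ≠ j → 0 ≤ A i j)
    (hrow : ∀ i, ∑ j, A i j = 0) :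
    (0 : ℂ) ∈ spectrum ℂ (A.map Complex.ofReal) ∧
    (∀ μ ∈ spectrum ℂ (A.map Complex.ofReal), μ ≠ 0 → μ.re < 0) ∧
    ((A.map Complex.ofReal).charpoly.rootMultiplicity 0 = 1 ↔
      ∃ root : Fin n, ∀ j, Relation.ReflTransGen (fun x y => 0 < A y x) root j) := by
  have : Nonempty (Fin n) := ⟨⟨0, hn⟩⟩
  have hrowℂ : ∀ i, ∑ j, A.map Complex.ofReal i j = 0 := fun i => by
    simp [← Complex.ofReal_sum, hrow]
  refine ⟨zero_mem_spectrum_of_sum_eq_zero hrowℂ,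
    fun μ hμ hμ0 => re_neg_of_mem_spectrum_map_ofReal hoff hrow hμ hμ0, ?_⟩
  rw [show A.map Complex.ofReal = A.map Complex.ofRealHom from rfl, charpoly_map,
    ← map_zero Complex.ofRealHom, ← eq_rootMultiplicity_map Complex.ofReal_injective]
  exact rootMultiplicity_zero_charpoly_eq_one_iff hoff hrow

theorem stmt13 {n : ℕ} (hn : 0 < n) (A : Matrix (Fin n) (Fin n) ℝ)
    (hdiag : ∀ i, A i i ≤ 0) (hoff : ∀ i j, i ≠ j → 0 ≤ A i j)
    (hrow : ∀ i, ∑ j, A i j = 0) :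
    (0 : ℂ) ∈ spectrum ℂ (A.map Complex.ofReal) ∧
    (∀ μ ∈ spectrum ℂ (A.map Complex.ofReal), μ ≠ 0 → μ.re < 0) ∧
    ((A.map Complex.ofReal).charpoly.rootMultiplicity 0 = 1 ↔
      ∃ root : Fin n, ∀ j, Relation.ReflTransGen (fun x y => 0 < A y x) root j) :=
  stmt13_general hn A hoff hrow
end

section
/- Let α > 0, β > 0, b > 0 and γ ∈ (1/2, 1). Then e^{-b(s+β)^{1-γ}} · ∑_{i=0}^{s} e^{b(i+β)^{1-γ}} / (i+β)^{2γ} = O(s^{-γ}) as s → ∞. -/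
/-!
Write `w(t) = exp (b (t + β)^(1-γ))`, so the summands are `w(i) / (i + β)^(2γ)`. By the mean value
theorem `w(t+1) - w(t) ≥ b (1-γ) (t+1+β)^(-γ) w(t)`, while `w(t+1) ≤ e^b w(t)` by subadditivity of
`x ↦ x^(1-γ)`. Hence a summand with `i > s/2` is `O(s^(-γ))` times the increment `w(i) - w(i-1)`,
and these telescope to `O(s^(-γ) w(s))`. The summands with `i ≤ s/2` are each at most
`w(s/2) / β^(2γ)`, and `s · w(s/2) / w(s) ≤ s · exp (-c s^(1-γ))` is `o(s^(-γ))`.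
-/

open Filter Real Finset Topology

namespace StretchedExpSum

variable {β b γ : ℝ}

noncomputable def weight (β b γ t : ℝ) : ℝ := exp (b * (t + β) ^ (1 - γ))

lemma weight_pos {t : ℝ} : 0 < weight β b γ t := exp_pos _

lemma weight_le_weight (hb : 0 ≤ b) (hγ : γ ≤ 1) {s t : ℝ} (hs : 0 ≤ s + β) (hst : s ≤ t) :
    weight β b γ s ≤ weight β b γ t :=
  exp_le_exp.2 <| mul_le_mul_of_nonneg_left (rpow_le_rpow hs (by linarith) (by linarith)) hb

lemma weight_add_one_le (hb : 0 ≤ b) (hγ0 : 0 ≤ γ) (hγ1 : γ ≤ 1) {t : ℝ} (ht : 0 ≤ t + β) :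
    weight β b γ (t + 1) ≤ exp b * weight β b γ t := by
  have h : (t + β + 1) ^ (1 - γ) ≤ (t + β) ^ (1 - γ) + 1 := by
    simpa using rpow_add_le_add_rpow ht zero_le_one (by linarith) (by linarith)
  rw [weight, weight, ← exp_add, add_right_comm]
  exact exp_le_exp.2 (by nlinarith)

lemma hasDerivAt_weight {t : ℝ} (ht : 0 < t + β) :
    HasDerivAt (weight β b γ) (weight β b γ t * (b * (1 - γ) * (t + β) ^ (-γ))) t := by
  have h := ((((hasDerivAt_id t).add_const β).rpow_const (p := 1 - γ)
    (Or.inl ht.ne')).const_mul b).exp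
  simp only [id_eq, one_mul, sub_sub_cancel_left] at h
  unfold weight
  convert h using 1
  ring

lemma mul_rpow_neg_mul_weight_le_sub (hb : 0 ≤ b) (hγ0 : 0 ≤ γ) (hγ1 : γ ≤ 1) {t : ℝ}
    (ht : 0 < t + β) :
    b * (1 - γ) * (t + 1 + β) ^ (-γ) * weight β b γ t ≤ weight β b γ (t + 1) - weight β b γ t := by
  obtain ⟨c, ⟨htc, hct⟩, hc⟩ := exists_hasDerivAt_eq_slope (weight β b γ)
    (fun x => weight β b γ x * (b * (1 - γ) * (x + β) ^ (-γ))) (lt_add_one t)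
    (fun x hx => (hasDerivAt_weight (by linarith [hx.1])).continuousAt.continuousWithinAt)
    (fun x hx => hasDerivAt_weight (by linarith [hx.1]))
  rw [add_sub_cancel_left, div_one] at hc
  rw [← hc]
  have hbγ : 0 ≤ b * (1 - γ) := mul_nonneg hb (by linarith)
  have h1 : (t + 1 + β) ^ (-γ) ≤ (c + β) ^ (-γ) :=
    rpow_le_rpow_of_nonpos (by linarith) (by linarith) (by linarith)
  calc _ ≤ b * (1 - γ) * (c + β) ^ (-γ) * weight β b γ c :=
        mul_le_mul (by gcongr) (weight_le_weight hb hγ1 ht.le htc.le) weight_pos.le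
          (mul_nonneg hbγ (rpow_nonneg (by linarith) _))
    _ = _ := by ring

lemma weight_div_rpow_le (hb : 0 < b) (hγ0 : 0 ≤ γ) (hγ1 : γ < 1) {t : ℝ} (ht : 0 < t + β) :
    weight β b γ (t + 1) / (t + 1 + β) ^ (2 * γ) ≤
      exp b / (b * (1 - γ)) * (t + 1 + β) ^ (-γ) * (weight β b γ (t + 1) - weight β b γ t) := by
  have hpos : 0 < t + 1 + β := by linarith
  set x := (t + 1 + β) ^ γ
  have hx : 0 < x := rpow_pos_of_pos hpos γ
  have hsq : (t + 1 + β) ^ (2 * γ) = x * x := by rw [two_mul, rpow_add hpos]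
  rw [hsq, rpow_neg hpos.le]
  have hstep := mul_rpow_neg_mul_weight_le_sub hb.le hγ0 hγ1.le ht
  rw [rpow_neg hpos.le] at hstep
  have hbγ : 0 < b * (1 - γ) := mul_pos hb (by linarith)
  have hγ1' : 1 - γ ≠ 0 := by linarith
  calc weight β b γ (t + 1) / (x * x) ≤ exp b * weight β b γ t / (x * x) := by
        gcongr; exact weight_add_one_le hb.le hγ0 hγ1.le ht.le
    _ = exp b / (b * (1 - γ)) * x⁻¹ * (b * (1 - γ) * x⁻¹ * weight β b γ t) := by
        field_simp
    _ ≤ _ := by gcongr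

lemma sum_Ico_weight_div_rpow_le (hβ : 0 < β) (hb : 0 < b) (hγ0 : 0 ≤ γ) (hγ1 : γ < 1)
    {m n : ℕ} (hmn : m ≤ n) :
    ∑ i ∈ Ico m n, weight β b γ (i + 1) / ((i : ℝ) + 1 + β) ^ (2 * γ) ≤
      exp b / (b * (1 - γ)) * ((m : ℝ) + 1 + β) ^ (-γ) * weight β b γ n := by
  have hC : 0 ≤ exp b / (b * (1 - γ)) := div_nonneg (exp_pos b).le (mul_nonneg hb.le (by linarith))
  have hD : 0 ≤ exp b / (b * (1 - γ)) * ((m : ℝ) + 1 + β) ^ (-γ) := mul_nonneg hC (by positivity)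
  set D := exp b / (b * (1 - γ)) * ((m : ℝ) + 1 + β) ^ (-γ)
  calc _ ≤ ∑ i ∈ Ico m n, D * (weight β b γ ((i + 1 : ℕ) : ℝ) - weight β b γ i) := by
        gcongr with i hi
        have hmi : (m : ℝ) ≤ i := by exact_mod_cast (mem_Ico.1 hi).1
        have hinc : 0 ≤ weight β b γ (i + 1) - weight β b γ i :=
          sub_nonneg.2 (weight_le_weight hb.le hγ1.le (by positivity) (by linarith))
        push_cast
        refine (weight_div_rpow_le hb hγ0 hγ1 (by positivity)).trans ?_
        gcongr
        exact mul_le_mul_of_nonneg_left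
          (rpow_le_rpow_of_nonpos (by positivity) (by linarith) (by linarith)) hC
    _ = D * (weight β b γ n - weight β b γ m) := by
        rw [← mul_sum, sum_Ico_sub (fun i : ℕ => weight β b γ i) hmn]
    _ ≤ D * weight β b γ n := by
        gcongr
        exact sub_le_self _ weight_pos.le

lemma sum_range_weight_div_rpow_le (hβ : 0 < β) (hb : 0 ≤ b) (hγ0 : 0 ≤ γ) (hγ1 : γ ≤ 1)
    (m : ℕ) :
    ∑ i ∈ range (m + 1), weight β b γ i / ((i : ℝ) + β) ^ (2 * γ) ≤
      (m + 1) * (weight β b γ m / β ^ (2 * γ)) := by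
  calc _ ≤ (range (m + 1)).card • (weight β b γ m / β ^ (2 * γ)) := by
        refine sum_le_card_nsmul _ _ _ fun i hi => ?_
        have him : (i : ℝ) ≤ m := by exact_mod_cast mem_range_succ_iff.1 hi
        gcongr
        · exact weight_pos.le
        · exact weight_le_weight hb hγ1 (by positivity) him
        · linarith [(Nat.cast_nonneg i : (0 : ℝ) ≤ i)]
    _ = _ := by rw [card_range, nsmul_eq_mul]; push_cast; ring

lemma weight_half_le (hβ : 0 ≤ β) (hb : 0 ≤ b) (hγ1 : γ ≤ 1) {s : ℝ} (hs : 4 * β ≤ s) :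
    weight β b γ (s / 2) ≤ exp (-(b * (1 - (3 / 4) ^ (1 - γ))) * s ^ (1 - γ)) * weight β b γ s := by
  have hs0 : 0 ≤ s := by linarith
  have h1 : (s / 2 + β) ^ (1 - γ) ≤ (3 / 4) ^ (1 - γ) * s ^ (1 - γ) := by
    rw [← mul_rpow (by norm_num) hs0]
    exact rpow_le_rpow (by positivity) (by linarith) (by linarith)
  have h2 : s ^ (1 - γ) ≤ (s + β) ^ (1 - γ) := rpow_le_rpow hs0 (by linarith) (by linarith)
  rw [weight, weight, ← exp_add]
  refine exp_le_exp.2 ?_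
  nlinarith [mul_le_mul_of_nonneg_left h1 hb, mul_le_mul_of_nonneg_left h2 hb]

lemma tendsto_rpow_mul_exp_neg_mul_rpow_atTop_nhds_zero (p : ℝ) {q a : ℝ} (hq : 0 < q)
    (ha : 0 < a) : Tendsto (fun x : ℝ => x ^ p * exp (-a * x ^ q)) atTop (𝓝 0) := by
  refine ((tendsto_rpow_mul_exp_neg_mul_atTop_nhds_zero (p / q) a ha).comp
    (tendsto_rpow_atTop hq)).congr' ?_
  filter_upwards [eventually_ge_atTop 0] with x hx
  rw [Function.comp_apply, ← rpow_mul hx, mul_div_cancel₀ _ hq.ne']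

lemma eventually_inv_weight_mul_sum_range_le (hβ : 0 < β) (hb : 0 < b) (hγ0 : 0 ≤ γ)
    (hγ1 : γ < 1) :
    ∀ᶠ s : ℕ in atTop, (weight β b γ s)⁻¹ *
      ∑ i ∈ range (s / 2 + 1), weight β b γ i / ((i : ℝ) + β) ^ (2 * γ) ≤ (s : ℝ) ^ (-γ) := by
  set a := b * (1 - (3 / 4 : ℝ) ^ (1 - γ))
  have ha : 0 < a := mul_pos hb (sub_pos.2 (rpow_lt_one (by norm_num) (by norm_num) (by linarith)))
  have hdecay :=
    ((tendsto_rpow_mul_exp_neg_mul_rpow_atTop_nhds_zero (1 + γ) (sub_pos.2 hγ1) ha).comp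
      tendsto_natCast_atTop_atTop).eventually_lt_const (rpow_pos_of_pos hβ (2 * γ))
  filter_upwards [hdecay, tendsto_natCast_atTop_atTop.eventually_ge_atTop (4 * β),
    eventually_ge_atTop 1] with s hdec hs4 hs1
  have hs : (0 : ℝ) < s := by exact_mod_cast hs1
  have hws : 0 < weight β b γ s := weight_pos
  have hm : ((s / 2 : ℕ) : ℝ) + 1 ≤ s := by exact_mod_cast (by omega : s / 2 + 1 ≤ s)
  have hwm : weight β b γ (s / 2 : ℕ) ≤ exp (-a * (s : ℝ) ^ (1 - γ)) * weight β b γ s :=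
    (weight_le_weight hb.le hγ1.le (by positivity) (Nat.cast_div_le)).trans
      (weight_half_le hβ.le hb.le hγ1.le hs4)
  calc _ ≤ (weight β b γ s)⁻¹ * ((s / 2 : ℕ) + 1) * (weight β b γ (s / 2 : ℕ) / β ^ (2 * γ)) := by
        rw [mul_assoc]
        exact mul_le_mul_of_nonneg_left
          (mod_cast sum_range_weight_div_rpow_le hβ hb.le hγ0 hγ1.le (s / 2)) (inv_nonneg.2 hws.le)
    _ ≤ (weight β b γ s)⁻¹ * s * (exp (-a * (s : ℝ) ^ (1 - γ)) * weight β b γ s / β ^ (2 * γ)) := by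
        gcongr
        exact div_nonneg weight_pos.le (by positivity)
    _ = (s : ℝ) ^ (1 + γ) * exp (-a * (s : ℝ) ^ (1 - γ)) / β ^ (2 * γ) * (s : ℝ) ^ (-γ) := by
        rw [rpow_add hs, rpow_one, rpow_neg hs.le]
        field_simp
    _ ≤ (s : ℝ) ^ (-γ) := by
        refine mul_le_of_le_one_left (by positivity) ?_
        rw [div_le_one (by positivity)]
        exact hdec.le

lemma inv_weight_mul_sum_Ico_le (hβ : 0 < β) (hb : 0 < b) (hγ0 : 0 ≤ γ) (hγ1 : γ < 1) {s : ℕ}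
    (hs : 0 < s) :
    (weight β b γ s)⁻¹ * ∑ i ∈ Ico (s / 2 + 1) (s + 1), weight β b γ i / ((i : ℝ) + β) ^ (2 * γ)
      ≤ exp b / (b * (1 - γ)) * 2 ^ γ * (s : ℝ) ^ (-γ) := by
  have hs' : (0 : ℝ) < s := by exact_mod_cast hs
  have hm : (s : ℝ) / 2 ≤ ((s / 2 : ℕ) : ℝ) + 1 + β := by
    have : (s : ℝ) ≤ 2 * ((s / 2 : ℕ) : ℝ) + 2 := by exact_mod_cast (by omega : s ≤ 2 * (s / 2) + 2)
    linarith
  have hC : 0 ≤ exp b / (b * (1 - γ)) := div_nonneg (exp_pos b).le (mul_nonneg hb.le (by linarith))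
  have hsum := sum_Ico_weight_div_rpow_le hβ hb hγ0 hγ1 (Nat.div_le_self s 2)
  rw [← sum_Ico_add' _ (s / 2) s 1]
  push_cast
  have hws : 0 < weight β b γ s := weight_pos
  calc _ ≤ (weight β b γ s)⁻¹ *
        (exp b / (b * (1 - γ)) * (((s / 2 : ℕ) : ℝ) + 1 + β) ^ (-γ) * weight β b γ s) :=
        mul_le_mul_of_nonneg_left hsum (inv_nonneg.2 hws.le)
    _ = exp b / (b * (1 - γ)) * (((s / 2 : ℕ) : ℝ) + 1 + β) ^ (-γ) := by field_simp
    _ ≤ exp b / (b * (1 - γ)) * ((s : ℝ) / 2) ^ (-γ) :=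
        mul_le_mul_of_nonneg_left (rpow_le_rpow_of_nonpos (by positivity) hm (by linarith)) hC
    _ = exp b / (b * (1 - γ)) * 2 ^ γ * (s : ℝ) ^ (-γ) := by
        rw [div_rpow hs'.le zero_le_two, rpow_neg zero_le_two]
        field_simp

end StretchedExpSum

open StretchedExpSum

theorem stmt17_general (β b γ : ℝ) (hβ : 0 < β) (hb : 0 < b)
    (hγ : γ ∈ Set.Ioo (1/2 : ℝ) 1) :
    ∃ K, ∀ᶠ s : ℕ in atTop,
      Real.exp (-b * ((s:ℝ)+β) ^ (1-γ)) *
        ∑ i ∈ Finset.range (s+1),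
          Real.exp (b * ((i:ℝ)+β) ^ (1-γ)) / ((i:ℝ)+β) ^ (2*γ)
      ≤ K * (s:ℝ) ^ (-γ) := by
  obtain ⟨hγ0, hγ1⟩ := hγ
  replace hγ0 : 0 ≤ γ := by linarith
  refine ⟨exp b / (b * (1 - γ)) * 2 ^ γ + 1, ?_⟩
  filter_upwards [eventually_inv_weight_mul_sum_range_le hβ hb hγ0 hγ1, eventually_gt_atTop 0]
    with s hlow hs
  have hexp : exp (-b * ((s : ℝ) + β) ^ (1 - γ)) = (weight β b γ s)⁻¹ := by
    rw [weight, ← exp_neg, neg_mul]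
  have hsplit := sum_range_add_sum_Ico (fun i : ℕ => weight β b γ i / ((i : ℝ) + β) ^ (2 * γ))
    (by omega : s / 2 + 1 ≤ s + 1)
  rw [hexp]
  change _ * ∑ i ∈ range (s + 1), weight β b γ i / ((i : ℝ) + β) ^ (2 * γ) ≤ _
  rw [← hsplit, mul_add]
  linarith [inv_weight_mul_sum_Ico_le hβ hb hγ0 hγ1 hs]

theorem stmt17 (α β b γ : ℝ) (hα : 0 < α) (hβ : 0 < β) (hb : 0 < b)
    (hγ : γ ∈ Set.Ioo (1/2 : ℝ) 1) :
    ∃ K, ∀ᶠ s : ℕ in atTop,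
      Real.exp (-b * ((s:ℝ)+β) ^ (1-γ)) *
        ∑ i ∈ Finset.range (s+1),
          Real.exp (b * ((i:ℝ)+β) ^ (1-γ)) / ((i:ℝ)+β) ^ (2*γ)
      ≤ K * (s:ℝ) ^ (-γ) :=
  stmt17_general β b γ hβ hb hγ
end
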